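/- arXiv:1812.06967 — 2 statements merged into one kernel-verified Lean document; each statement's English description precedes it below -/
import Mathlib

section
/- Comparison of the left own-biased branch with the full-attention value: assume ρ > 0 and condition (EXP). Then V̲_own(p̲*) = U^FA(p̲*), V̲_own(1) = U^FA(1), and V̲_own(p) < U^FA(p) for every p ∈ (p̲*, 1). -/
set_option linter.unusedVariables false

noncomputable section

def Ur (urR ulR urL ulL lam rho c p : ℝ) : ℝ := p * urR + (1 - p) * urL

def Ul (urR ulR urL ulL lam rho c p : ℝ) : ℝ := p * ulR + (1 - p) * ulL

def U (urR ulR urL ulL lam rho c p : ℝ) : ℝ :=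
  max (Ur urR ulR urL ulL lam rho c p) (Ul urR ulR urL ulL lam rho c p)

/-- Full-attention value `U^FA(p)`. -/
def UFA (urR ulR urL ulL lam rho c p : ℝ) : ℝ :=
  (lam * (p * urR + (1 - p) * ulL) - c) / (rho + lam)

/-- Lower boundary of the experimentation region. -/
def plowStar (urR ulR urL ulL lam rho c : ℝ) : ℝ :=
  (ulL * rho + c) / (rho * (ulL - ulR) + (urR - ulR) * lam)

/-- The belief at which `U_r` and `U_ℓ` cross. -/
def phat (urR ulR urL ulL lam rho c : ℝ) : ℝ :=
  (ulL - urL) / ((urR - ulR) + (ulL - urL))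

/-- Left branch of the own-biased value (for `ρ > 0`); since `ρ/λ > 0`, the real-power
formula automatically extends by continuity to `p = 1` with value `(u_r^R λ − c)/(λ+ρ)`. -/
def Vlown (urR ulR urL ulL lam rho c p : ℝ) : ℝ :=
  -(c / rho) * (1 - p) + ((urR * lam - c) / (lam + rho)) * p
    + (lam * (c + ulL * rho) / (rho * (lam + rho)))
      * (plowStar urR ulR urL ulL lam rho c
          / (1 - plowStar urR ulR urL ulL lam rho c)) ^ (rho / lam)
      * ((1 - p) / p) ^ (rho / lam) * (1 - p)

/-!
The gap `U^FA − V̲_own` factors as `(1 − p) · A · (1 − x(p)^(ρ/λ))` with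
`A = λ (c + u_ℓ^L ρ) / (ρ (λ + ρ)) > 0` and `x(p) = (p̲*/(1 − p̲*)) · ((1 − p)/p)`, a ratio of odds
that equals `1` at `p = p̲*` and lies in `[0, 1)` for `p ∈ (p̲*, 1]`. Condition (EXP) says
`U_ℓ(p̂) < U^FA(p̂)`, which rearranges to `p̲* < p̂ < 1`, so the cutoff is a genuine belief.
-/

def lowerOwnBranch (urR ulL lam rho c P p : ℝ) : ℝ :=
  -(c / rho) * (1 - p) + ((urR * lam - c) / (lam + rho)) * p
    + (lam * (c + ulL * rho) / (rho * (lam + rho)))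
      * (P / (1 - P)) ^ (rho / lam)
      * ((1 - p) / p) ^ (rho / lam) * (1 - p)

theorem Vlown_eq_lowerOwnBranch (urR ulR urL ulL lam rho c p : ℝ) :
    Vlown urR ulR urL ulL lam rho c p
      = lowerOwnBranch urR ulL lam rho c (plowStar urR ulR urL ulL lam rho c) p :=
  rfl

theorem UFA_sub_lowerOwnBranch (urR ulR urL ulL lam rho c P p : ℝ) (hrho : rho ≠ 0)
    (hsum : lam + rho ≠ 0) :
    UFA urR ulR urL ulL lam rho c p - lowerOwnBranch urR ulL lam rho c P p
      = (1 - p) * (lam * (c + ulL * rho) / (rho * (lam + rho)))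
        * (1 - (P / (1 - P)) ^ (rho / lam) * ((1 - p) / p) ^ (rho / lam)) := by
  have hsum' : rho + lam ≠ 0 := by rwa [add_comm]
  unfold UFA lowerOwnBranch
  field_simp
  ring

theorem odds_rpow_mul_inv_odds_rpow {P : ℝ} (hP0 : 0 < P) (hP1 : P < 1) (r : ℝ) :
    (P / (1 - P)) ^ r * ((1 - P) / P) ^ r = 1 := by
  have hP1' : 0 < 1 - P := sub_pos.2 hP1
  have hinv : P / (1 - P) * ((1 - P) / P) = 1 := by field_simp
  rw [← Real.mul_rpow (by positivity) (by positivity), hinv, Real.one_rpow]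

theorem odds_rpow_mul_inv_odds_rpow_lt_one {P p r : ℝ} (hP0 : 0 < P) (hPp : P < p) (hp1 : p < 1)
    (hr : 0 < r) : (P / (1 - P)) ^ r * ((1 - p) / p) ^ r < 1 := by
  have hp0 : 0 < p := hP0.trans hPp
  have hP1 : 0 < 1 - P := by linarith
  have hodds : P / (1 - P) * ((1 - p) / p) < 1 := by
    rw [div_mul_div_comm, div_lt_one (by positivity)]
    nlinarith
  rw [← Real.mul_rpow (by positivity) (div_nonneg (by linarith) hp0.le)]
  exact Real.rpow_lt_one (by positivity) hodds hr

theorem lowerOwnBranch_vs_UFA (urR ulR urL ulL lam rho c P : ℝ) (hlam : 0 < lam) (hrho : 0 < rho)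
    (hP : P ∈ Set.Ioo 0 1) (hnum : 0 < c + ulL * rho) :
    lowerOwnBranch urR ulL lam rho c P P = UFA urR ulR urL ulL lam rho c P
    ∧ lowerOwnBranch urR ulL lam rho c P 1 = UFA urR ulR urL ulL lam rho c 1
    ∧ ∀ p ∈ Set.Ioo P 1,
        lowerOwnBranch urR ulL lam rho c P p < UFA urR ulR urL ulL lam rho c p := by
  obtain ⟨hP0, hP1⟩ := hP
  have gap p := UFA_sub_lowerOwnBranch urR ulR urL ulL lam rho c P p hrho.ne'
    (by positivity : lam + rho ≠ 0)
  have hA : 0 < lam * (c + ulL * rho) / (rho * (lam + rho)) := by positivity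
  refine ⟨?_, ?_, ?_⟩
  · rw [eq_comm, ← sub_eq_zero, gap, odds_rpow_mul_inv_odds_rpow hP0 hP1, sub_self, mul_zero]
  · rw [eq_comm, ← sub_eq_zero, gap, sub_self, zero_mul, zero_mul]
  · rintro p ⟨hPp, hp1⟩
    rw [← sub_pos, gap]
    have hlt := odds_rpow_mul_inv_odds_rpow_lt_one hP0 hPp hp1 (div_pos hrho hlam)
    exact mul_pos (mul_pos (by linarith) hA) (by linarith)

theorem phat_mem_Ioo (urR ulR urL ulL lam rho c : ℝ) (hR : ulR < urR) (hL : urL < ulL) :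
    phat urR ulR urL ulL lam rho c ∈ Set.Ioo 0 1 := by
  unfold phat
  constructor
  · apply div_pos <;> linarith
  · rw [div_lt_one (by linarith)]
    linarith

theorem plowStar_mem_Ioo_of_Ul_lt_UFA (urR ulR urL ulL lam rho c q : ℝ) (hq : 0 < q)
    (hsum : 0 < rho + lam) (hnum : 0 < ulL * rho + c)
    (h : Ul urR ulR urL ulL lam rho c q < UFA urR ulR urL ulL lam rho c q) :
    plowStar urR ulR urL ulL lam rho c ∈ Set.Ioo 0 q := by
  have key : ulL * rho + c < q * (rho * (ulL - ulR) + (urR - ulR) * lam) := by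
    unfold Ul UFA at h
    rw [lt_div_iff₀ hsum] at h
    linarith
  have hden : 0 < rho * (ulL - ulR) + (urR - ulR) * lam :=
    pos_of_mul_pos_right (hnum.trans key) hq.le
  unfold plowStar
  exact Set.mem_Ioo.2 ⟨div_pos hnum hden, (div_lt_iff₀ hden).2 (by linarith)⟩

/-- Comparison of the left own-biased branch with the full-attention value:
they coincide at `p̲*` and at `1`, and `V̲_own < U^FA` strictly in between. -/
theorem Vlown_vs_UFA
    (urR ulR urL ulL lam rho c : ℝ)
    (h_urR : urR > max 0 ulR) (h_ulL : ulL > max 0 urL)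
    (h_lam : 0 < lam) (h_rho : 0 < rho) (h_c : 0 ≤ c)
    (h_EXP : UFA urR ulR urL ulL lam rho c (phat urR ulR urL ulL lam rho c)
      > U urR ulR urL ulL lam rho c (phat urR ulR urL ulL lam rho c)) :
    Vlown urR ulR urL ulL lam rho c (plowStar urR ulR urL ulL lam rho c)
      = UFA urR ulR urL ulL lam rho c (plowStar urR ulR urL ulL lam rho c)
    ∧ Vlown urR ulR urL ulL lam rho c 1 = UFA urR ulR urL ulL lam rho c 1
    ∧ ∀ p ∈ Set.Ioo (plowStar urR ulR urL ulL lam rho c) 1,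
        Vlown urR ulR urL ulL lam rho c p < UFA urR ulR urL ulL lam rho c p := by
  have hulL : 0 < ulL := (le_max_left _ _).trans_lt h_ulL
  obtain ⟨hphat0, hphat1⟩ := phat_mem_Ioo urR ulR urL ulL lam rho c
    ((le_max_right _ _).trans_lt h_urR) ((le_max_right _ _).trans_lt h_ulL)
  obtain ⟨hP0, hPphat⟩ := plowStar_mem_Ioo_of_Ul_lt_UFA urR ulR urL ulL lam rho c _ hphat0
    (by positivity) (by positivity) ((le_max_right _ _).trans_lt h_EXP)
  simp only [Vlown_eq_lowerOwnBranch]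
  exact lowerOwnBranch_vs_UFA urR ulR urL ulL lam rho c
    (plowStar urR ulR urL ulL lam rho c) h_lam h_rho
    ⟨hP0, hPphat.trans hphat1⟩ (by positivity)
end
end

section
/- Comparison of the opposite-biased value with the full-attention value: assume ρ > 0. Then V̲_opp(0) = U^FA(0), V̄_opp(1) = U^FA(1), and the function V_opp defined by V_opp(p) = V̲_opp(p) for p ≤ p* and V_opp(p) = V̄_opp(p) for p ≥ p* satisfies V_opp(p) < U^FA(p) for every p ∈ (0,1). -/
/-!
On the left branch, `U^FA - V̲_opp` factors as
`p · λ(u_r^R ρ + c) · (2ρ + λ - λ x^{ρ/λ}) / (ρ(λ+ρ)(2ρ+λ))`, where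
`x = ((1-p*)/p*) · (p/(1-p))` is an odds ratio with `x ≤ 1` exactly when `p ≤ p*`;
so the difference is positive on `(0, p*]`. Swapping the two states (`p ↦ 1-p`,
`u_r^R ↔ u_ℓ^L`, hence `p* ↦ 1-p*`) turns the right branch into the left one.
-/

set_option linter.unusedVariables false

noncomputable section

/-- The absorbing belief `p*`. -/
def pstar (urR ulR urL ulL lam rho c : ℝ) : ℝ :=
  (ulL * rho + c) / ((urR * rho + c) + (ulL * rho + c))

/-- Left branch of the opposite-biased value (for `ρ > 0`); since `ρ/λ > 0`, the real-power
formula automatically extends by continuity to `p = 0` with value `(u_ℓ^L λ − c)/(λ+ρ)`. -/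
def Vlopp (urR ulR urL ulL lam rho c p : ℝ) : ℝ :=
  -(c / rho) * p + ((ulL * lam - c) / (lam + rho)) * (1 - p)
    + (lam / (rho * (2 * rho + lam))) * (lam * (urR * rho + c) / (lam + rho))
      * (((1 - pstar urR ulR urL ulL lam rho c) / pstar urR ulR urL ulL lam rho c)
          * (p / (1 - p))) ^ (rho / lam) * p

/-- Right branch of the opposite-biased value (for `ρ > 0`); extends by continuity to
`p = 1` with value `(u_r^R λ − c)/(λ+ρ)`. -/
def Vhopp (urR ulR urL ulL lam rho c p : ℝ) : ℝ :=
  -(c / rho) * (1 - p) + ((urR * lam - c) / (lam + rho)) * p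
    + (lam / (rho * (2 * rho + lam))) * (lam * (ulL * rho + c) / (lam + rho))
      * ((pstar urR ulR urL ulL lam rho c / (1 - pstar urR ulR urL ulL lam rho c))
          * ((1 - p) / p)) ^ (rho / lam) * (1 - p)

lemma odds_ratio_le_one {p q : ℝ} (hq0 : 0 < q) (hp1 : p < 1) (hpq : p ≤ q) :
    (1 - q) / q * (p / (1 - p)) ≤ 1 := by
  rw [div_mul_div_comm, div_le_one (mul_pos hq0 (by linarith))]
  nlinarith

section

variable (urR ulR urL ulL lam rho c : ℝ)

lemma UFA_swap (p : ℝ) :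
    UFA ulL urL ulR urR lam rho c (1 - p) = UFA urR ulR urL ulL lam rho c p := by
  unfold UFA; ring

lemma pstar_swap (h : (urR * rho + c) + (ulL * rho + c) ≠ 0) :
    pstar ulL urL ulR urR lam rho c = 1 - pstar urR ulR urL ulL lam rho c := by
  rw [pstar, pstar, eq_sub_iff_add_eq, add_comm (ulL * rho + c), ← add_div, div_self h]

lemma Vhopp_eq_Vlopp_swap (h : (urR * rho + c) + (ulL * rho + c) ≠ 0) (p : ℝ) :
    Vhopp urR ulR urL ulL lam rho c p = Vlopp ulL urL ulR urR lam rho c (1 - p) := by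
  rw [Vhopp, Vlopp, pstar_swap urR ulR urL ulL lam rho c h, sub_sub_cancel, sub_sub_cancel]

lemma Vlopp_zero : Vlopp urR ulR urL ulL lam rho c 0 = UFA urR ulR urL ulL lam rho c 0 := by
  simp only [Vlopp, UFA, mul_zero, add_zero, sub_zero, mul_one, zero_mul, zero_add]
  ring

lemma pstar_mem_Ioo (hA : 0 < urR * rho + c) (hB : 0 < ulL * rho + c) :
    pstar urR ulR urL ulL lam rho c ∈ Set.Ioo 0 1 :=
  ⟨div_pos hB (by linarith), (div_lt_one (by linarith)).2 (by linarith)⟩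

lemma UFA_sub_Vlopp (hlam : 0 < lam) (hrho : 0 < rho) (p : ℝ) :
    UFA urR ulR urL ulL lam rho c p - Vlopp urR ulR urL ulL lam rho c p
      = p * (lam * (urR * rho + c))
          * (2 * rho + lam - lam * (((1 - pstar urR ulR urL ulL lam rho c)
              / pstar urR ulR urL ulL lam rho c) * (p / (1 - p))) ^ (rho / lam))
          / (rho * (lam + rho) * (2 * rho + lam)) := by
  have : lam + rho ≠ 0 := by positivity
  have : rho + lam ≠ 0 := by positivity
  have : 2 * rho + lam ≠ 0 := by positivity
  unfold UFA Vlopp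
  field_simp
  ring

lemma Vlopp_lt_UFA (hurR : 0 < urR) (hulL : 0 < ulL) (hlam : 0 < lam) (hrho : 0 < rho)
    (hc : 0 ≤ c) {p : ℝ} (hp0 : 0 < p) (hp1 : p < 1)
    (hpq : p ≤ pstar urR ulR urL ulL lam rho c) :
    Vlopp urR ulR urL ulL lam rho c p < UFA urR ulR urL ulL lam rho c p := by
  obtain ⟨hq0, hq1⟩ := pstar_mem_Ioo urR ulR urL ulL lam rho c (by positivity) (by positivity)
  set q := pstar urR ulR urL ulL lam rho c
  have hx0 : 0 ≤ (1 - q) / q * (p / (1 - p)) :=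
    mul_nonneg (div_nonneg (by linarith) hq0.le) (div_nonneg hp0.le (by linarith))
  have hpow : ((1 - q) / q * (p / (1 - p))) ^ (rho / lam) ≤ 1 :=
    Real.rpow_le_one hx0 (odds_ratio_le_one hq0 hp1 hpq) (by positivity)
  have hgap : 0 < 2 * rho + lam - lam * ((1 - q) / q * (p / (1 - p))) ^ (rho / lam) := by
    have := mul_le_of_le_one_right hlam.le hpow
    linarith
  have hdiff : 0 < UFA urR ulR urL ulL lam rho c p - Vlopp urR ulR urL ulL lam rho c p := by
    rw [UFA_sub_Vlopp urR ulR urL ulL lam rho c hlam hrho]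
    positivity
  linarith

end

/-- Comparison of the opposite-biased value with the full-attention value:
they coincide at the endpoints `0` and `1`, and `V_opp < U^FA` strictly on `(0,1)`. -/
theorem Vopp_vs_UFA
    (urR ulR urL ulL lam rho c : ℝ)
    (h_urR : urR > max 0 ulR) (h_ulL : ulL > max 0 urL)
    (h_lam : 0 < lam) (h_rho : 0 < rho) (h_c : 0 ≤ c) :
    Vlopp urR ulR urL ulL lam rho c 0 = UFA urR ulR urL ulL lam rho c 0
    ∧ Vhopp urR ulR urL ulL lam rho c 1 = UFA urR ulR urL ulL lam rho c 1
    ∧ ∀ p ∈ Set.Ioo (0 : ℝ) 1,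
        (if p ≤ pstar urR ulR urL ulL lam rho c then Vlopp urR ulR urL ulL lam rho c p
          else Vhopp urR ulR urL ulL lam rho c p)
          < UFA urR ulR urL ulL lam rho c p := by
  have hurR : 0 < urR := (le_max_left 0 ulR).trans_lt h_urR
  have hulL : 0 < ulL := (le_max_left 0 urL).trans_lt h_ulL
  have hsum : (urR * rho + c) + (ulL * rho + c) ≠ 0 := by positivity
  have hswap := Vhopp_eq_Vlopp_swap urR ulR urL ulL lam rho c hsum
  refine ⟨Vlopp_zero .., ?_, fun p ⟨hp0, hp1⟩ => ?_⟩
  · rw [hswap, sub_self, Vlopp_zero, ← UFA_swap, sub_zero]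
  split_ifs with hpq
  · exact Vlopp_lt_UFA urR ulR urL ulL lam rho c hurR hulL h_lam h_rho h_c hp0 hp1 hpq
  · rw [hswap, ← UFA_swap]
    refine Vlopp_lt_UFA ulL urL ulR urR lam rho c hulL hurR h_lam h_rho h_c
      (by linarith) (by linarith) ?_
    rw [pstar_swap urR ulR urL ulL lam rho c hsum]
    linarith
end
end
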